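/- (Lemma 1) Every state s ∈ 𝒮_G has all of its components at most k; consequently the state space 𝒮_G is a finite set. -/
import Mathlib


/-- Hamming distance on the alphabet `A`. -/
def ham {A : Type*} [DecidableEq A] (x y : A) : ℕ := if x = y then 0 else 1

/-- `EdgeChain src dst n e` : the first `n` edges of the edge sequence `e` form a
directed path in the labelled graph with source map `src` and destination map `dst`. -/
def EdgeChain {V E : Type*} (src dst : E → V) (n : ℕ) (e : ℕ → E) : Prop :=
  ∀ i : ℕ, i + 1 < n → dst (e i) = src (e (i + 1))

/-- The graph is strongly connected: for any ordered pair of vertices there is a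
(nonempty) directed path from the first to the second. -/
def StronglyConnected {V E : Type*} (src dst : E → V) : Prop :=
  ∀ u v : V, ∃ (l : List E) (h : l ≠ []),
    List.Chain' (fun e f => dst e = src f) l ∧ src (l.head h) = u ∧ dst (l.getLast h) = v

/-- The Viterbi transition operator `V` : `Vop src dst lab s x v` is the minimum of
`s (src e) + d(x, lab e)` over all edges `e` ending at `v`. -/
noncomputable def Vop {V E A : Type*} [DecidableEq A] (src dst : E → V) (lab : E → A)
    (s : V → ℕ) (x : A) : V → ℕ :=
  fun v => sInf {m : ℕ | ∃ e : E, dst e = v ∧ m = s (src e) + ham x (lab e)}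

/-- Minimum component of a state. -/
noncomputable def minS {V : Type*} (s : V → ℕ) : ℕ := sInf (Set.range s)

/-- The reduced Viterbi transition operator `Ṽ`: subtract from `V(s,x)` its minimum
component. -/
noncomputable def Vred {V E A : Type*} [DecidableEq A] (src dst : E → V) (lab : E → A)
    (s : V → ℕ) (x : A) : V → ℕ :=
  fun v => Vop src dst lab s x v - minS (Vop src dst lab s x)

/-- The Viterbi state sequence: `S⁰` is the zero state and `Sⁱ = V(S^{i-1}, xᵢ)`
(the letter `xᵢ` of the paper is `x (i-1)` here). -/
noncomputable def VSeq {V E A : Type*} [DecidableEq A] (src dst : E → V) (lab : E → A)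
    (x : ℕ → A) : ℕ → V → ℕ
  | 0 => fun _ => 0
  | i + 1 => Vop src dst lab (VSeq src dst lab x i) (x i)

/-- The reduced Viterbi state sequence `S̃ⁱ(v) = Sⁱ(v) - min Sⁱ`. -/
noncomputable def SredSeq {V E A : Type*} [DecidableEq A] (src dst : E → V) (lab : E → A)
    (x : ℕ → A) (i : ℕ) : V → ℕ :=
  fun v => VSeq src dst lab x i v - minS (VSeq src dst lab x i)

/-- The state space `𝒮_G`: the zero state together with everything obtainable from it
by finitely many applications of the reduced Viterbi transition operator. -/
def SG {V E A : Type*} [DecidableEq A] (src dst : E → V) (lab : E → A) : Set (V → ℕ) :=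
  { s | ∃ l : List A, s = l.foldl (Vred src dst lab) (fun _ => 0) }

/-- `PrimIndex src dst k` : `k` is positive and any vertex can be reached from any
vertex by a directed path of length exactly `k`. -/
def PrimIndex {V E : Type*} (src dst : E → V) (k : ℕ) : Prop :=
  0 < k ∧ ∀ u v : V, ∃ e : ℕ → E,
    EdgeChain src dst k e ∧ src (e 0) = u ∧ dst (e (k - 1)) = v

/-- Minimum total Hamming distortion over all directed paths of length `n`. -/
noncomputable def minDist {V E A : Type*} [DecidableEq A] (src dst : E → V) (lab : E → A)
    (n : ℕ) (x : Fin n → A) : ℕ :=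
  sInf {m : ℕ | ∃ e : ℕ → E, EdgeChain src dst n e ∧
    m = ∑ i : Fin n, ham (x i) (lab (e i.1))}

/-- `aSeq src dst lab p n` is the expected minimum path distortion
`a_n = E[ min_{paths} Σ d(Xᵢ, L(eᵢ)) ]` for the i.i.d. source with letter distribution `p`. -/
noncomputable def aSeq {V E A : Type*} [DecidableEq A] [Fintype A] (src dst : E → V)
    (lab : E → A) (p : A → ℝ) (n : ℕ) : ℝ :=
  ∑ x : Fin n → A, (∏ i, p (x i)) * (minDist src dst lab n x : ℝ)

section AuxLemma1

variable {V E A : Type*} [DecidableEq A]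

/-- `m`-step reachability. -/
def Reach (src dst : E → V) : ℕ → V → V → Prop
  | 0, u, v => u = v
  | (m+1), u, v => ∃ e, dst e = v ∧ Reach src dst m u (src e)

lemma edgeChain_reach (src dst : E → V) (e : ℕ → E) :
    ∀ n, EdgeChain src dst (n+1) e → Reach src dst (n+1) (src (e 0)) (dst (e n)) := by
  intro n
  induction n with
  | zero => intro _; exact ⟨e 0, rfl, rfl⟩
  | succ n ih =>
    intro h
    refine ⟨e (n+1), rfl, ?_⟩
    rw [← h n (by omega)]
    exact ih (fun i hi => h i (by omega))

lemma prim_reach {src dst : E → V} {k : ℕ} (h : PrimIndex src dst k) (u v : V) :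
    Reach src dst k u v := by
  obtain ⟨hk, hp⟩ := h
  obtain ⟨e, hc, h0, h1⟩ := hp u v
  obtain ⟨m, rfl⟩ : ∃ m, k = m + 1 := ⟨k - 1, by omega⟩
  have h1' : dst (e m) = v := by simpa using h1
  rw [← h0, ← h1']
  exact edgeChain_reach src dst e m hc

lemma exists_edge_into {src dst : E → V} (hconn : StronglyConnected src dst) (v : V) :
    ∃ e, dst e = v := by
  obtain ⟨l, h, _, _, hlast⟩ := hconn v v
  exact ⟨l.getLast h, hlast⟩

variable (src dst : E → V) (lab : E → A)

lemma Vset_nonempty (hconn : StronglyConnected src dst) (s : V → ℕ) (x : A) (v : V) :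
    {m : ℕ | ∃ e : E, dst e = v ∧ m = s (src e) + ham x (lab e)}.Nonempty := by
  obtain ⟨e, he⟩ := exists_edge_into hconn v
  exact ⟨_, e, he, rfl⟩

lemma ham_le_one (x y : A) : ham x y ≤ 1 := by
  unfold ham; split <;> omega

lemma Vop_le (s : V → ℕ) (x : A) (v : V) {e : E} (he : dst e = v) :
    Vop src dst lab s x v ≤ s (src e) + 1 := by
  have h1 : Vop src dst lab s x v ≤ s (src e) + ham x (lab e) :=
    Nat.sInf_le ⟨e, he, rfl⟩
  have h2 := ham_le_one (A := A) x (lab e)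
  omega

lemma Vop_mem (hconn : StronglyConnected src dst) (s : V → ℕ) (x : A) (v : V) :
    ∃ e : E, dst e = v ∧ Vop src dst lab s x v = s (src e) + ham x (lab e) :=
  Nat.sInf_mem (Vset_nonempty src dst lab hconn s x v)

lemma Vop_lower (hconn : StronglyConnected src dst) {c : ℕ} {s : V → ℕ}
    (hc : ∀ v, c ≤ s v) (x : A) (v : V) : c ≤ Vop src dst lab s x v := by
  obtain ⟨e, _, he⟩ := Vop_mem src dst lab hconn s x v
  have := hc (src e)
  omega

lemma Vop_shift (hconn : StronglyConnected src dst) {c : ℕ} {s : V → ℕ}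
    (hc : ∀ v, c ≤ s v) (x : A) (v : V) :
    Vop src dst lab (fun w => s w - c) x v = Vop src dst lab s x v - c := by
  apply le_antisymm
  · obtain ⟨e, he, hev⟩ := Vop_mem src dst lab hconn s x v
    have h1 : Vop src dst lab (fun w => s w - c) x v ≤ (s (src e) - c) + ham x (lab e) :=
      Nat.sInf_le ⟨e, he, rfl⟩
    have := hc (src e)
    omega
  · obtain ⟨e, he, hev⟩ := Vop_mem src dst lab hconn (fun w => s w - c) x v
    have h1 : Vop src dst lab s x v ≤ s (src e) + ham x (lab e) :=
      Nat.sInf_le ⟨e, he, rfl⟩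
    have := hc (src e)
    omega

/-- The unreduced fold of the Viterbi operator. -/
noncomputable def Wl (l : List A) : V → ℕ :=
  List.foldl (Vop src dst lab) (fun _ => 0) l

lemma Wl_concat (l : List A) (x : A) :
    Wl src dst lab (l ++ [x]) = Vop src dst lab (Wl src dst lab l) x := by
  simp [Wl, List.foldl_append]

lemma minS_le (s : V → ℕ) (v : V) : minS s ≤ s v := Nat.sInf_le ⟨v, rfl⟩

lemma exists_minS [Nonempty V] (s : V → ℕ) : ∃ u, s u = minS s :=
  Nat.sInf_mem (Set.range_nonempty s)

lemma minS_shift [Nonempty V] {c : ℕ} {s : V → ℕ} (hc : ∀ v, c ≤ s v) :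
    minS (fun v => s v - c) = minS s - c := by
  obtain ⟨u, hu⟩ := exists_minS s
  obtain ⟨u', hu'⟩ := exists_minS (fun v => s v - c)
  have h1 : minS (fun v => s v - c) ≤ s u - c := minS_le _ u
  have h2 : minS s ≤ s u' := minS_le s u'
  have := hc u
  have := hc u'
  omega

lemma Wl_le_length (hconn : StronglyConnected src dst) (l : List A) (v : V) :
    Wl src dst lab l v ≤ l.length := by
  induction l using List.reverseRecOn generalizing v with
  | nil => simp [Wl]
  | append_singleton l x ih =>
    rw [Wl_concat]
    obtain ⟨e, he⟩ := exists_edge_into hconn v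
    have h1 := Vop_le src dst lab (Wl src dst lab l) x v he
    have h2 := ih (src e)
    simp only [List.length_append, List.length_singleton]
    omega

lemma Wl_back (hconn : StronglyConnected src dst) (l₂ l₁ : List A) (u : V) :
    ∃ w, Wl src dst lab l₁ w ≤ Wl src dst lab (l₁ ++ l₂) u := by
  induction l₂ using List.reverseRecOn generalizing u with
  | nil => exact ⟨u, by simp⟩
  | append_singleton l x ih =>
    rw [← List.append_assoc, Wl_concat]
    obtain ⟨e, he, hev⟩ := Vop_mem src dst lab hconn (Wl src dst lab (l₁ ++ l)) x u
    obtain ⟨w, hw⟩ := ih (src e)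
    exact ⟨w, by omega⟩

lemma Wl_fwd (l₂ : List A) : ∀ (l₁ : List A) (w v : V),
    Reach src dst l₂.length w v →
    Wl src dst lab (l₁ ++ l₂) v ≤ Wl src dst lab l₁ w + l₂.length := by
  induction l₂ using List.reverseRecOn with
  | nil =>
    intro l₁ w v hr
    have hwv : w = v := hr
    simp [hwv]
  | append_singleton l x ih =>
    intro l₁ w v hr
    simp only [List.length_append, List.length_singleton] at hr ⊢
    obtain ⟨e, he, hre⟩ := hr
    rw [← List.append_assoc, Wl_concat]
    have h1 := Vop_le src dst lab (Wl src dst lab (l₁ ++ l)) x v he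
    have h2 := ih l₁ w (src e) hre
    omega

lemma Wl_diff_le (hconn : StronglyConnected src dst) {k : ℕ}
    (hprim : PrimIndex src dst k) (l : List A) (u v : V) :
    Wl src dst lab l v ≤ Wl src dst lab l u + k := by
  by_cases h : l.length ≤ k
  · have := Wl_le_length src dst lab hconn l v
    omega
  · set l₁ := l.take (l.length - k) with hl₁
    set l₂ := l.drop (l.length - k) with hl₂
    have hsplit : l₁ ++ l₂ = l := List.take_append_drop _ l
    have hlen : l₂.length = k := by
      rw [hl₂, List.length_drop]; omega
    obtain ⟨w, hw⟩ := Wl_back src dst lab hconn l₂ l₁ u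
    have hr : Reach src dst l₂.length w v := by rw [hlen]; exact prim_reach hprim w v
    have h2 := Wl_fwd src dst lab l₂ l₁ w v hr
    rw [hsplit] at hw h2
    omega

lemma foldl_Vred_eq [Nonempty V] (hconn : StronglyConnected src dst) (l : List A) :
    List.foldl (Vred src dst lab) (fun _ => 0) l
      = fun v => Wl src dst lab l v - minS (Wl src dst lab l) := by
  induction l using List.reverseRecOn with
  | nil => funext v; simp [Wl]
  | append_singleton l x ih =>
    rw [List.foldl_append, List.foldl_cons, List.foldl_nil, ih]
    set c := minS (Wl src dst lab l) with hc
    have hcle : ∀ v, c ≤ Wl src dst lab l v := minS_le _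
    funext v
    have hshift : Vop src dst lab (fun w => Wl src dst lab l w - c) x
        = fun v => Vop src dst lab (Wl src dst lab l) x v - c :=
      funext (Vop_shift src dst lab hconn hcle x)
    have hlow : ∀ v, c ≤ Vop src dst lab (Wl src dst lab l) x v :=
      Vop_lower src dst lab hconn hcle x
    have hmin : minS (fun v => Vop src dst lab (Wl src dst lab l) x v - c)
        = minS (Vop src dst lab (Wl src dst lab l) x) - c := minS_shift hlow
    obtain ⟨u, hu⟩ := exists_minS (Vop src dst lab (Wl src dst lab l) x)
    have h1 := hlow u
    have h2 := hlow v
    simp only [Vred, hshift, hmin, Wl_concat]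
    omega

end AuxLemma1

/-- Lemma 1: Every state `s ∈ 𝒮_G` has all of its components at most `k`
(where `k` is the smallest positive integer such that any vertex can be reached from any
vertex by a path of length exactly `k`); consequently the state space `𝒮_G` is finite. -/
theorem stateSpace_components_le_and_finite
    {V E A : Type*} [Fintype V] [Nonempty V] [Fintype E] [Fintype A] [DecidableEq A]
    (src dst : E → V) (lab : E → A) (hconn : StronglyConnected src dst)
    (k : ℕ) (hk : IsLeast {j : ℕ | PrimIndex src dst j} k) :
    (∀ s ∈ SG src dst lab, ∀ v : V, s v ≤ k) ∧ (SG src dst lab).Finite := by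
  have hprim : PrimIndex src dst k := hk.1
  have hbound : ∀ s ∈ SG src dst lab, ∀ v : V, s v ≤ k := by
    rintro s ⟨l, rfl⟩ v
    rw [foldl_Vred_eq src dst lab hconn l]
    show Wl src dst lab l v - minS (Wl src dst lab l) ≤ k
    obtain ⟨u, hu⟩ := exists_minS (Wl src dst lab l)
    have h1 := Wl_diff_le src dst lab hconn hprim l u v
    have h2 := minS_le (Wl src dst lab l) v
    omega
  refine ⟨hbound, ?_⟩
  apply Set.Finite.subset (Set.Finite.pi (fun _ : V => Set.finite_Iic k))
  intro s hs
  rw [Set.mem_pi]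
  intro v _
  exact hbound s hs v
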